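/- Let (x, X, y, Y₁₂, α) ∈ ℝ² × Sym₂(ℝ) × ℝ² × ℝ × ℝ², and set t₁ := 1 − y₁, t₂ := 1 − y₂, and T₁₂ := 1 + Y₁₂ − y₁ − y₂. Then the PSD condition (P5) holds if and only if the 5×5 matrix [[1−T₁₂, x₁, x₂, t₁−T₁₂, t₂−T₁₂], [x₁, X₁₁, X₁₂, 0, α₁], [x₂, X₁₂, X₂₂, α₂, 0], [t₁−T₁₂, 0, α₂, t₁−T₁₂, 0], [t₂−T₁₂, α₁, 0, 0, t₂−T₁₂]] is positive semidefinite. -/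
import Mathlib


open Matrix

set_option linter.unusedVariables false

/-- Linear conditions (L). -/
def Lcond (x1 x2 X11 X12 X22 y1 y2 Y12 a1 a2 : ℝ) : Prop :=
  X11 ≤ x1 ∧ x1 ≤ y1 ∧ X22 ≤ x2 ∧ x2 ≤ y2 ∧
  max 0 (x1 - a1 + x2 - a2 - Y12) ≤ X12 ∧ X12 ≤ min (x1 - a1) (x2 - a2) ∧
  0 ≤ a1 ∧ a1 ≤ y1 - Y12 ∧ 0 ≤ a2 ∧ a2 ≤ y2 - Y12 ∧
  max 0 (y1 + y2 - 1) ≤ Y12 ∧ Y12 ≤ min y1 y2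

/-- PSD condition (P3). -/
def P3cond (x1 x2 X11 X12 X22 y1 y2 Y12 a1 a2 : ℝ) : Prop :=
  (!![Y12, x1 - a1, x2 - a2;
      x1 - a1, x1 - a1, X12;
      x2 - a2, X12, x2 - a2] : Matrix (Fin 3) (Fin 3) ℝ).PosSemidef

/-- PSD condition (P4a). -/
def P4acond (x1 x2 X11 X12 X22 y1 y2 Y12 a1 a2 : ℝ) : Prop :=
  (!![y1 - Y12, 0, a1, 0;
      0, Y12, x1 - a1, x2 - a2;
      a1, x1 - a1, X11, X12;
      0, x2 - a2, X12, x2 - a2] : Matrix (Fin 4) (Fin 4) ℝ).PosSemidef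

/-- PSD condition (P4b). -/
def P4bcond (x1 x2 X11 X12 X22 y1 y2 Y12 a1 a2 : ℝ) : Prop :=
  (!![y2 - Y12, 0, 0, a2;
      0, Y12, x1 - a1, x2 - a2;
      0, x1 - a1, x1 - a1, X12;
      a2, x2 - a2, X12, X22] : Matrix (Fin 4) (Fin 4) ℝ).PosSemidef

/-- PSD condition (P5). -/
def P5cond (x1 x2 X11 X12 X22 y1 y2 Y12 a1 a2 : ℝ) : Prop :=
  (!![y1 - Y12, 0, 0, a1, 0;
      0, y2 - Y12, 0, 0, a2;
      0, 0, Y12, x1 - a1, x2 - a2;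
      a1, 0, x1 - a1, X11, X12;
      0, a2, x2 - a2, X12, X22] : Matrix (Fin 5) (Fin 5) ℝ).PosSemidef

/-- With t₁ = 1 − y₁, t₂ = 1 − y₂ and T₁₂ = 1 + Y₁₂ − y₁ − y₂, the PSD condition
(P5) holds iff the transformed 5×5 matrix is positive semidefinite. -/
theorem stmt15 (x1 x2 X11 X12 X22 y1 y2 Y12 a1 a2 t1 t2 T12 : ℝ)
    (ht1 : t1 = 1 - y1) (ht2 : t2 = 1 - y2) (hT : T12 = 1 + Y12 - y1 - y2) :
    P5cond x1 x2 X11 X12 X22 y1 y2 Y12 a1 a2 ↔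
      (!![1 - T12, x1, x2, t1 - T12, t2 - T12;
          x1, X11, X12, 0, a1;
          x2, X12, X22, a2, 0;
          t1 - T12, 0, a2, t1 - T12, 0;
          t2 - T12, a1, 0, 0, t2 - T12] : Matrix (Fin 5) (Fin 5) ℝ).PosSemidef := by
  subst ht1 ht2 hT
  unfold P5cond
  set A : Matrix (Fin 5) (Fin 5) ℝ :=
    !![y1 - Y12, 0, 0, a1, 0;
       0, y2 - Y12, 0, 0, a2;
       0, 0, Y12, x1 - a1, x2 - a2;
       a1, 0, x1 - a1, X11, X12;
       0, a2, x2 - a2, X12, X22] with hAdef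
  set B : Matrix (Fin 5) (Fin 5) ℝ :=
    !![1 - (1 + Y12 - y1 - y2), x1, x2, 1 - y1 - (1 + Y12 - y1 - y2), 1 - y2 - (1 + Y12 - y1 - y2);
       x1, X11, X12, 0, a1;
       x2, X12, X22, a2, 0;
       1 - y1 - (1 + Y12 - y1 - y2), 0, a2, 1 - y1 - (1 + Y12 - y1 - y2), 0;
       1 - y2 - (1 + Y12 - y1 - y2), a1, 0, 0, 1 - y2 - (1 + Y12 - y1 - y2)] with hBdef
  have hM : (!![(1:ℝ),0,0,0,1; 1,0,0,1,0; 1,0,0,0,0; 0,1,0,0,0; 0,0,1,0,0] :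
      Matrix (Fin 5) (Fin 5) ℝ)ᴴ * A *
      !![(1:ℝ),0,0,0,1; 1,0,0,1,0; 1,0,0,0,0; 0,1,0,0,0; 0,0,1,0,0] = B := by
    ext i j
    fin_cases i <;> fin_cases j <;>
      simp [hAdef, hBdef, Matrix.mul_apply, Fin.sum_univ_succ, Matrix.conjTranspose_apply] <;> ring
  have hN : (!![(0:ℝ),0,1,0,0; 0,0,0,1,0; 0,0,0,0,1; 0,1,-1,0,0; 1,0,-1,0,0] :
      Matrix (Fin 5) (Fin 5) ℝ)ᴴ * B *
      !![(0:ℝ),0,1,0,0; 0,0,0,1,0; 0,0,0,0,1; 0,1,-1,0,0; 1,0,-1,0,0] = A := by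
    ext i j
    fin_cases i <;> fin_cases j <;>
      simp [hAdef, hBdef, Matrix.mul_apply, Fin.sum_univ_succ, Matrix.conjTranspose_apply] <;> ring
  constructor
  · intro hA
    rw [← hM]
    exact hA.conjTranspose_mul_mul_same _
  · intro hB
    rw [← hN]
    exact hB.conjTranspose_mul_mul_same _
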